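/- arXiv:1212.1850 — 6 statements merged into one kernel-verified Lean document; each statement's English description precedes it below -/
import Mathlib

section
/- For reals α, β, γ, δ, ε with βγ = φ, βδ = γε = α, the 4×4 matrices of the form [[a,b,c,d],[αc,a,γd,δb],[αb,βd,a,εc],[βγd,βc,γb,a]] form a set closed under matrix addition and multiplication. -/
/-- The general matrix form of a cyclic 4D number `a·1 + b·I + c·J + d·K`. -/
def cyc4 (α β γ δ ε a b c d : ℝ) : Matrix (Fin 4) (Fin 4) ℝ :=
  !![a, b, c, d;
     α * c, a, γ * d, δ * b;
     α * b, β * d, a, ε * c;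
     β * γ * d, β * c, γ * b, a]

theorem cyc4_add (α β γ δ ε a₁ b₁ c₁ d₁ a₂ b₂ c₂ d₂ : ℝ) :
    cyc4 α β γ δ ε a₁ b₁ c₁ d₁ + cyc4 α β γ δ ε a₂ b₂ c₂ d₂ =
      cyc4 α β γ δ ε (a₁ + a₂) (b₁ + b₂) (c₁ + c₂) (d₁ + d₂) := by
  simp only [cyc4, Matrix.of_add_of, Matrix.cons_add_cons, Matrix.empty_add_empty]
  ring_nf

/-- The coefficients follow the multiplication table
`I² = δ K`, `J² = ε K`, `K² = β γ`, `I J = J I = α`, `J K = K J = β I`, `I K = K I = γ J`. -/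
theorem cyc4_mul {α β γ δ ε : ℝ} (hβδ : β * δ = α) (hγε : γ * ε = α)
    (a₁ b₁ c₁ d₁ a₂ b₂ c₂ d₂ : ℝ) :
    cyc4 α β γ δ ε a₁ b₁ c₁ d₁ * cyc4 α β γ δ ε a₂ b₂ c₂ d₂ =
      cyc4 α β γ δ ε (a₁ * a₂ + α * b₁ * c₂ + α * c₁ * b₂ + β * γ * d₁ * d₂)
        (a₁ * b₂ + b₁ * a₂ + β * c₁ * d₂ + β * d₁ * c₂)
        (a₁ * c₂ + γ * b₁ * d₂ + c₁ * a₂ + γ * d₁ * b₂)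
        (a₁ * d₂ + δ * b₁ * b₂ + ε * c₁ * c₂ + d₁ * a₂) := by
  ext i j
  fin_cases i <;> fin_cases j <;>
    simp only [cyc4, Matrix.mul_apply, Fin.sum_univ_four, Matrix.of_apply, Matrix.cons_val',
      Matrix.cons_val, Matrix.cons_val_zero, Matrix.cons_val_one, Matrix.cons_val_fin_one,
      Fin.isValue, Fin.mk_one, Fin.zero_eta, Fin.reduceFinMk] <;>
    grind

theorem stmt_12 (α β γ δ ε : ℝ) (hβδ : β * δ = α) (hγε : γ * ε = α) :
    ∀ a₁ b₁ c₁ d₁ a₂ b₂ c₂ d₂ : ℝ,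
      (∃ a b c d : ℝ,
        cyc4 α β γ δ ε a₁ b₁ c₁ d₁ + cyc4 α β γ δ ε a₂ b₂ c₂ d₂ =
          cyc4 α β γ δ ε a b c d) ∧
      (∃ a b c d : ℝ,
        cyc4 α β γ δ ε a₁ b₁ c₁ d₁ * cyc4 α β γ δ ε a₂ b₂ c₂ d₂ =
          cyc4 α β γ δ ε a b c d) :=
  fun a₁ b₁ c₁ d₁ a₂ b₂ c₂ d₂ =>
    ⟨⟨_, _, _, _, cyc4_add α β γ δ ε a₁ b₁ c₁ d₁ a₂ b₂ c₂ d₂⟩,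
      ⟨_, _, _, _, cyc4_mul hβδ hγε a₁ b₁ c₁ d₁ a₂ b₂ c₂ d₂⟩⟩
end

section
/- In a 4-dimensional associative real algebra with basis {1, i, j, k} satisfying i² = α, j² = β, k² = γ, jk = α′i, kj = α″i, ki = β′j, ik = β″j, ij = γ′k, ji = γ″k, associativity implies αβ = γγ′γ″, βγ = αα′α″, and γα = ββ′β″. -/
/-!
Each instance of associativity `(x * y) * w = x * (y * w)` among the basis elements equates two
scalar multiples of one nonzero basis element, hence their coefficients. The triples
`(j, j, k)`, `(k, k, i)`, `(i, j, k)`, `(j, k, i)`, `(i, k, j)` give five relations between the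
structure constants, of which the three identities are ring consequences.
-/

theorem structure_const_mul_eq_of_mul_assoc {K A : Type*} [CommRing K] [IsDomain K] [Ring A]
    [Algebra K A] [Module.IsTorsionFree K A] {x y z w v u : A} {a b c d : K} (hu : u ≠ 0)
    (hxy : x * y = a • z) (hyw : y * w = b • v) (hzw : z * w = c • u) (hxv : x * v = d • u) :
    a * c = b * d :=
  smul_left_injective K hu <|
    calc (a * c) • u = x * y * w := by rw [hxy, smul_mul_assoc, hzw, smul_smul]
      _ = x * (y * w) := mul_assoc x y w
      _ = (b * d) • u := by rw [hyw, mul_smul_comm, hxv, smul_smul]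

theorem stmt_13 {A : Type*} [Ring A] [Algebra ℝ A] (i j k : A)
    (α β γ α' β' γ' α'' β'' γ'' : ℝ)
    (hind : LinearIndependent ℝ ![(1 : A), i, j, k])
    (hi2 : i * i = algebraMap ℝ A α) (hj2 : j * j = algebraMap ℝ A β)
    (hk2 : k * k = algebraMap ℝ A γ)
    (hjk : j * k = algebraMap ℝ A α' * i) (hkj : k * j = algebraMap ℝ A α'' * i)
    (hki : k * i = algebraMap ℝ A β' * j) (hik : i * k = algebraMap ℝ A β'' * j)
    (hij : i * j = algebraMap ℝ A γ' * k) (hji : j * i = algebraMap ℝ A γ'' * k) :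
    α * β = γ * γ' * γ'' ∧ β * γ = α * α' * α'' ∧ γ * α = β * β' * β'' := by
  have h1 : (1 : A) ≠ 0 := by simpa using hind.ne_zero 0
  have hi : i ≠ 0 := by simpa using hind.ne_zero 1
  have hk : k ≠ 0 := by simpa using hind.ne_zero 3
  simp only [Algebra.algebraMap_eq_smul_one, smul_mul_assoc, one_mul]
    at hi2 hj2 hk2 hjk hkj hki hik hij hji
  have hjjk : β * 1 = α' * γ'' := structure_const_mul_eq_of_mul_assoc hk hj2 hjk
    ((one_mul k).trans (one_smul ℝ k).symm) hji
  have hkki : γ * 1 = β' * α'' := structure_const_mul_eq_of_mul_assoc hi hk2 hki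
    ((one_mul i).trans (one_smul ℝ i).symm) hkj
  have hijk : γ' * γ = α' * α := structure_const_mul_eq_of_mul_assoc h1 hij hjk hk2 hi2
  have hjki : α' * α = β' * β := structure_const_mul_eq_of_mul_assoc h1 hjk hki hi2 hj2
  have hikj : β'' * β = α'' * α := structure_const_mul_eq_of_mul_assoc h1 hik hkj hj2 hi2
  refine ⟨?_, ?_, ?_⟩
  · linear_combination α * hjjk - γ'' * hijk
  · linear_combination β * hkki - α'' * hjki
  · linear_combination α * hkki - β' * hikj
end

section
/- In the Klein 4D algebra with the multiplication rules above, associativity implies αα′ = ββ′ = γγ′ = α″β″γ″ and αα″ = ββ″ = γγ″ = α′β′γ′. -/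
/-! Each relation is read off one associativity law among the basis elements. Expanding
`(jk)i = j(ki)`, `(ki)j = k(ij)` and their mirror images `i(kj) = (ik)j`, `j(ik) = (ji)k`
gives `α'α = β'β = γ'γ` and `α''α = β''β = γ''γ` as identities between scalars. The last
equalities come from `(kk)i = k(ki)` and `i(kk) = (ik)k`, which give `γ = β'α'' = β''α'`, together
with `(ij)i = i(ji)`, which gives `γ'β' = γ''β''`. -/

section StructureConstants

variable {K A : Type*} [Field K] [Ring A] [Algebra K A]

theorem algebraMap_mul_right_cancel {v : A} (hv : v ≠ 0) {a b : K}
    (h : algebraMap K A a * v = algebraMap K A b * v) : a = b := by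
  simp only [← Algebra.smul_def] at h
  exact smul_left_injective K hv h

variable {x y z : A} {a b c d c' d' : K}

theorem mul_eq_mul_of_mul_assoc_cyclic [Nontrivial A]
    (hx : x * x = algebraMap K A a) (hy : y * y = algebraMap K A b)
    (hyz : y * z = algebraMap K A c * x) (hzx : z * x = algebraMap K A d * y) :
    c * a = d * b := by
  apply (algebraMap K A).injective
  calc algebraMap K A (c * a) = y * z * x := by rw [hyz, mul_assoc, hx, map_mul]
    _ = y * (z * x) := mul_assoc y z x
    _ = algebraMap K A (d * b) := by rw [hzx, Algebra.left_comm, hy, map_mul]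

theorem mul_eq_mul_of_mul_assoc_anticyclic [Nontrivial A]
    (hx : x * x = algebraMap K A a) (hy : y * y = algebraMap K A b)
    (hzy : z * y = algebraMap K A c * x) (hxz : x * z = algebraMap K A d * y) :
    c * a = d * b := by
  apply (algebraMap K A).injective
  calc algebraMap K A (c * a) = x * (z * y) := by rw [hzy, Algebra.left_comm, hx, map_mul]
    _ = x * z * y := (mul_assoc x z y).symm
    _ = algebraMap K A (d * b) := by rw [hxz, mul_assoc, hy, map_mul]

theorem eq_mul_of_mul_self_mul_left (hx : x ≠ 0) (hz : z * z = algebraMap K A a)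
    (hzx : z * x = algebraMap K A d * y) (hzy : z * y = algebraMap K A c * x) :
    a = d * c := by
  apply algebraMap_mul_right_cancel hx
  calc algebraMap K A a * x = z * z * x := by rw [hz]
    _ = z * (z * x) := mul_assoc z z x
    _ = algebraMap K A (d * c) * x := by
      rw [hzx, Algebra.left_comm, hzy, map_mul, mul_assoc]

theorem eq_mul_of_mul_mul_self_right (hx : x ≠ 0) (hz : z * z = algebraMap K A a)
    (hxz : x * z = algebraMap K A d * y) (hyz : y * z = algebraMap K A c * x) :
    a = d * c := by
  apply algebraMap_mul_right_cancel hx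
  calc algebraMap K A a * x = x * (z * z) := by rw [hz, Algebra.commutes]
    _ = x * z * z := (mul_assoc x z z).symm
    _ = algebraMap K A (d * c) * x := by rw [hxz, mul_assoc, hyz, map_mul, mul_assoc]

theorem mul_eq_mul_of_mul_mul_self (hy : y ≠ 0)
    (hxy : x * y = algebraMap K A c * z) (hzx : z * x = algebraMap K A d * y)
    (hyx : y * x = algebraMap K A c' * z) (hxz : x * z = algebraMap K A d' * y) :
    c * d = c' * d' := by
  apply algebraMap_mul_right_cancel hy
  calc algebraMap K A (c * d) * y = x * y * x := by rw [hxy, mul_assoc, hzx, map_mul, mul_assoc]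
    _ = x * (y * x) := mul_assoc x y x
    _ = algebraMap K A (c' * d') * y := by
      rw [hyx, Algebra.left_comm, hxz, map_mul, mul_assoc]

end StructureConstants

theorem stmt_14 {A : Type*} [Ring A] [Algebra ℝ A] (i j k : A)
    (α β γ α' β' γ' α'' β'' γ'' : ℝ)
    (hind : LinearIndependent ℝ ![(1 : A), i, j, k])
    (hi2 : i * i = algebraMap ℝ A α) (hj2 : j * j = algebraMap ℝ A β)
    (hk2 : k * k = algebraMap ℝ A γ)
    (hjk : j * k = algebraMap ℝ A α' * i) (hkj : k * j = algebraMap ℝ A α'' * i)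
    (hki : k * i = algebraMap ℝ A β' * j) (hik : i * k = algebraMap ℝ A β'' * j)
    (hij : i * j = algebraMap ℝ A γ' * k) (hji : j * i = algebraMap ℝ A γ'' * k) :
    (α * α' = β * β' ∧ β * β' = γ * γ' ∧ γ * γ' = α'' * β'' * γ'') ∧
    (α * α'' = β * β'' ∧ β * β'' = γ * γ'' ∧ γ * γ'' = α' * β' * γ') := by
  have hi : i ≠ 0 := by simpa using hind.ne_zero 1
  have hj : j ≠ 0 := by simpa using hind.ne_zero 2
  have : Nontrivial A := nontrivial_of_ne i 0 hi
  have hαβ' := mul_eq_mul_of_mul_assoc_cyclic hi2 hj2 hjk hki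
  have hβγ' := mul_eq_mul_of_mul_assoc_cyclic hj2 hk2 hki hij
  have hαβ'' := mul_eq_mul_of_mul_assoc_anticyclic hi2 hj2 hkj hik
  have hβγ'' := mul_eq_mul_of_mul_assoc_anticyclic hj2 hk2 hik hji
  have hγ' := eq_mul_of_mul_self_mul_left hi hk2 hki hkj
  have hγ'' := eq_mul_of_mul_mul_self_right hi hk2 hik hjk
  have hγβ := mul_eq_mul_of_mul_mul_self hj hij hki hji hik
  refine ⟨⟨?_, ?_, ?_⟩, ⟨?_, ?_, ?_⟩⟩
  · linear_combination hαβ'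
  · linear_combination hβγ'
  · rw [hγ']; linear_combination α'' * hγβ
  · linear_combination hαβ''
  · linear_combination hβγ''
  · rw [hγ'']; linear_combination -α' * hγβ
end

section
/- With ρ = αβγ, ρ′ = α′β′γ′, ρ″ = α″β″γ″ in the Klein 4D algebra, the constraints imply ρρ′ρ″ = ρ′⁴ = ρ″⁴ = ρ² ≥ 0; in particular, ρ, ρ′, ρ″ are either all zero or all nonzero. -/
/-!
With ρ = αβγ, ρ′ = α′β′γ′, ρ″ = α″β″γ″, the constraints give ρ = ρ′ρ″ (since ρ = γ · αβ = (γγ′)(γγ″)),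
and ρρ′ = (αα′)(ββ′)(γγ′) = ρ″³, ρρ″ = (αα″)(ββ″)(γγ″) = ρ′³. These three relations alone force
ρρ′ρ″ = ρ′⁴ = ρ″⁴ = ρ², and since each of ρ′, ρ″ has a power equal to ρ², all three vanish together.
-/

namespace KleinAlgebra

section Constraints

variable {R : Type*} [CommRing R] {α β γ α' β' γ' α'' β'' γ'' : R}

theorem rho_eq_rho'_mul_rho'' (h1 : α * β = γ * γ' * γ'') (h6 : γ * γ' = α'' * β'' * γ'')
    (h9 : γ * γ'' = α' * β' * γ') :
    α * β * γ = α' * β' * γ' * (α'' * β'' * γ'') := by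
  linear_combination γ * h1 + γ * γ'' * h6 + α'' * β'' * γ'' * h9

theorem rho_mul_rho'_eq_rho''_pow_three (h4 : α * α' = β * β') (h5 : β * β' = γ * γ')
    (h6 : γ * γ' = α'' * β'' * γ'') :
    α * β * γ * (α' * β' * γ') = (α'' * β'' * γ'') ^ 3 := by
  linear_combination (β * β' * γ * γ') * h4 + (β * β' * γ * γ' + (γ * γ') ^ 2) * h5
    + ((γ * γ') ^ 2 + γ * γ' * (α'' * β'' * γ'') + (α'' * β'' * γ'') ^ 2) * h6

theorem rho_mul_rho''_eq_rho'_pow_three (h7 : α * α'' = β * β'') (h8 : β * β'' = γ * γ'')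
    (h9 : γ * γ'' = α' * β' * γ') :
    α * β * γ * (α'' * β'' * γ'') = (α' * β' * γ') ^ 3 := by
  linear_combination (β * β'' * γ * γ'') * h7 + (β * β'' * γ * γ'' + (γ * γ'') ^ 2) * h8
    + ((γ * γ'') ^ 2 + γ * γ'' * (α' * β' * γ') + (α' * β' * γ') ^ 2) * h9

end Constraints

theorem pow_four_eq_of_rho_relations {R : Type*} [CommRing R] {ρ ρ' ρ'' : R}
    (h : ρ = ρ' * ρ'') (h' : ρ * ρ' = ρ'' ^ 3) (h'' : ρ * ρ'' = ρ' ^ 3) :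
    ρ * ρ' * ρ'' = ρ' ^ 4 ∧ ρ' ^ 4 = ρ'' ^ 4 ∧ ρ'' ^ 4 = ρ ^ 2 := by
  subst h
  have hρ' : ρ' * ρ' * ρ'' * ρ'' = ρ' ^ 4 := by linear_combination ρ' * h''
  have hρ'' : ρ' * ρ' * ρ'' * ρ'' = ρ'' ^ 4 := by linear_combination ρ'' * h'
  exact ⟨by linear_combination hρ', by linear_combination hρ'' - hρ',
    by linear_combination -hρ''⟩

end KleinAlgebra

theorem eq_zero_iff_of_pow_eq_pow {M : Type*} [MonoidWithZero M] [NoZeroDivisors M] {a b : M}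
    {m n : ℕ} (hm : m ≠ 0) (hn : n ≠ 0) (h : a ^ m = b ^ n) : a = 0 ↔ b = 0 := by
  rw [← pow_eq_zero_iff hm, h, pow_eq_zero_iff hn]

open KleinAlgebra in
theorem stmt_15_general (α β γ α' β' γ' α'' β'' γ'' : ℝ)
    (h1 : α * β = γ * γ' * γ'')
    (h4 : α * α' = β * β') (h5 : β * β' = γ * γ') (h6 : γ * γ' = α'' * β'' * γ'')
    (h7 : α * α'' = β * β'') (h8 : β * β'' = γ * γ'') (h9 : γ * γ'' = α' * β' * γ') :
    let ρ := α * β * γ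
    let ρ' := α' * β' * γ'
    let ρ'' := α'' * β'' * γ''
    ρ * ρ' * ρ'' = ρ' ^ 4 ∧ ρ' ^ 4 = ρ'' ^ 4 ∧ ρ'' ^ 4 = ρ ^ 2 ∧ 0 ≤ ρ ^ 2 ∧
      ((ρ = 0 ∧ ρ' = 0 ∧ ρ'' = 0) ∨ (ρ ≠ 0 ∧ ρ' ≠ 0 ∧ ρ'' ≠ 0)) := by
  intro ρ ρ' ρ''
  obtain ⟨h₁, h₂, h₃⟩ := pow_four_eq_of_rho_relations (rho_eq_rho'_mul_rho'' h1 h6 h9)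
    (rho_mul_rho'_eq_rho''_pow_three h4 h5 h6) (rho_mul_rho''_eq_rho'_pow_three h7 h8 h9)
  have hρ' : ρ' = 0 ↔ ρ = 0 := eq_zero_iff_of_pow_eq_pow four_ne_zero two_ne_zero (h₂.trans h₃)
  have hρ'' : ρ'' = 0 ↔ ρ = 0 := eq_zero_iff_of_pow_eq_pow four_ne_zero two_ne_zero h₃
  refine ⟨h₁, h₂, h₃, sq_nonneg ρ, ?_⟩
  rw [hρ', hρ'']
  tauto

theorem stmt_15 (α β γ α' β' γ' α'' β'' γ'' : ℝ)
    (h1 : α * β = γ * γ' * γ'') (h2 : β * γ = α * α' * α'') (h3 : γ * α = β * β' * β'')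
    (h4 : α * α' = β * β') (h5 : β * β' = γ * γ') (h6 : γ * γ' = α'' * β'' * γ'')
    (h7 : α * α'' = β * β'') (h8 : β * β'' = γ * γ'') (h9 : γ * γ'' = α' * β' * γ') :
    let ρ := α * β * γ
    let ρ' := α' * β' * γ'
    let ρ'' := α'' * β'' * γ''
    ρ * ρ' * ρ'' = ρ' ^ 4 ∧ ρ' ^ 4 = ρ'' ^ 4 ∧ ρ'' ^ 4 = ρ ^ 2 ∧ 0 ≤ ρ ^ 2 ∧
      ((ρ = 0 ∧ ρ' = 0 ∧ ρ'' = 0) ∨ (ρ ≠ 0 ∧ ρ' ≠ 0 ∧ ρ'' ≠ 0)) :=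
  stmt_15_general α β γ α' β' γ' α'' β'' γ'' h1 h4 h5 h6 h7 h8 h9
end

section
/- The Klein 4D algebra is commutative (i.e., α′ = α″, β′ = β″, γ′ = γ″) only if ρ = αβγ ≥ 0, and if ρ > 0 then equality of primed and double-primed parameters is consistent with the constraints. -/
/-!
If the algebra is commutative, the constraint `β γ = α α' α''` becomes `β γ = α α'²`, so
`ρ = α β γ = (α α')²` is a square. Conversely, for `ρ > 0` put `s = √ρ`; the symmetric choice
`α' = α'' = s / α`, `β' = β'' = s / β`, `γ' = γ'' = s / γ` makes every product `α α'`, `β β'`,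
`γ γ'` and `α' β' γ'` equal to `s`, which satisfies all the constraints.
-/

def IsKleinAssociative {R : Type*} [Mul R] (α β γ α' β' γ' α'' β'' γ'' : R) : Prop :=
  α * β = γ * γ' * γ'' ∧ β * γ = α * α' * α'' ∧ γ * α = β * β' * β'' ∧
    α * α' = β * β' ∧ β * β' = γ * γ' ∧ γ * γ' = α'' * β'' * γ'' ∧
    α * α'' = β * β'' ∧ β * β'' = γ * γ'' ∧ γ * γ'' = α' * β' * γ'

theorem IsKleinAssociative.mul_mul_nonneg {R : Type*} [CommRing R] [LinearOrder R]
    [IsStrictOrderedRing R] {α β γ α' β' γ' : R}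
    (h : IsKleinAssociative α β γ α' β' γ' α' β' γ') : 0 ≤ α * β * γ := by
  have hsq : α * β * γ = (α * α') ^ 2 := by
    rw [mul_assoc, h.2.1]
    ring
  exact hsq ▸ sq_nonneg _

theorem isKleinAssociative_div {K : Type*} [Field K] {α β γ s : K}
    (hα : α ≠ 0) (hβ : β ≠ 0) (hγ : γ ≠ 0) (hs : s * s = α * β * γ) :
    IsKleinAssociative α β γ (s / α) (s / β) (s / γ) (s / α) (s / β) (s / γ) := by
  refine ⟨?_, ?_, ?_, ?_, ?_, ?_, ?_, ?_, ?_⟩ <;> field_simp <;>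
    first | linear_combination -hs | linear_combination -s * hs

theorem stmt_16 (α β γ : ℝ) :
    (∀ α' β' γ' α'' β'' γ'' : ℝ,
      (α * β = γ * γ' * γ'' ∧ β * γ = α * α' * α'' ∧ γ * α = β * β' * β'' ∧
       α * α' = β * β' ∧ β * β' = γ * γ' ∧ γ * γ' = α'' * β'' * γ'' ∧
       α * α'' = β * β'' ∧ β * β'' = γ * γ'' ∧ γ * γ'' = α' * β' * γ') →
      (α' = α'' ∧ β' = β'' ∧ γ' = γ'') → 0 ≤ α * β * γ) ∧
    (0 < α * β * γ →
      ∃ α' β' γ' α'' β'' γ'' : ℝ, α' = α'' ∧ β' = β'' ∧ γ' = γ'' ∧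
        α * β = γ * γ' * γ'' ∧ β * γ = α * α' * α'' ∧ γ * α = β * β' * β'' ∧
        α * α' = β * β' ∧ β * β' = γ * γ' ∧ γ * γ' = α'' * β'' * γ'' ∧
        α * α'' = β * β'' ∧ β * β'' = γ * γ'' ∧ γ * γ'' = α' * β' * γ') := by
  refine ⟨?_, fun hρ => ?_⟩
  · rintro α' β' γ' α'' β'' γ'' h ⟨rfl, rfl, rfl⟩
    exact IsKleinAssociative.mul_mul_nonneg h
  · obtain ⟨hαβ, hγ⟩ := mul_ne_zero_iff.mp hρ.ne'
    obtain ⟨hα, hβ⟩ := mul_ne_zero_iff.mp hαβ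
    exact ⟨_, _, _, _, _, _, rfl, rfl, rfl,
      isKleinAssociative_div hα hβ hγ (Real.mul_self_sqrt hρ.le)⟩
end

section
/- For a fixed real α, the 4×4 matrices [[a,b,c,d],[αb,a,αd,c],[αc,αd,a,b],[α²d,αc,αb,a]] (obtained by the Cayley–Dickson doubling of the 2D construction) form a commutative ring under matrix addition and multiplication, and the substitution (α_Klein, β, γ, α′, β′, γ′, α″, β″, γ″) = (α, α, α², α, α, 1, α, α, 1) satisfies the Klein 4D associativity constraints. -/
/-!
Multiplying two matrices of the form `cd4 α` gives again a matrix of that form, whose four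
parameters are expressions symmetric under swapping the two factors; so these matrices form a
commutative subring.
-/

/-- The 4×4 matrix obtained by Cayley–Dickson doubling of the 2D representation. -/
def cd4 (α a b c d : ℝ) : Matrix (Fin 4) (Fin 4) ℝ :=
  !![a, b, c, d;
     α * b, a, α * d, c;
     α * c, α * d, a, b;
     α ^ 2 * d, α * c, α * b, a]

section cd4

variable (α : ℝ)

theorem cd4_mul (a b c d e f g h : ℝ) :
    cd4 α a b c d * cd4 α e f g h =
      cd4 α (a * e + α * b * f + α * c * g + α ^ 2 * d * h) (a * f + b * e + α * c * h + α * d * g)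
        (a * g + α * b * h + c * e + α * d * f) (a * h + b * g + c * f + d * e) := by
  ext i j
  fin_cases i <;> fin_cases j <;> simp [cd4, Matrix.mul_apply, Fin.sum_univ_four] <;> ring

theorem cd4_mul_comm (a b c d e f g h : ℝ) :
    cd4 α a b c d * cd4 α e f g h = cd4 α e f g h * cd4 α a b c d := by
  rw [cd4_mul, cd4_mul]
  congr 1 <;> ring

theorem cd4_add (a b c d e f g h : ℝ) :
    cd4 α a b c d + cd4 α e f g h = cd4 α (a + e) (b + f) (c + g) (d + h) := by
  ext i j
  fin_cases i <;> fin_cases j <;> simp [cd4] <;> ring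

theorem cd4_neg (a b c d : ℝ) : -cd4 α a b c d = cd4 α (-a) (-b) (-c) (-d) := by
  ext i j
  fin_cases i <;> fin_cases j <;> simp [cd4]

theorem cd4_zero : cd4 α 0 0 0 0 = 0 := by
  ext i j
  fin_cases i <;> fin_cases j <;> simp [cd4]

theorem cd4_one : cd4 α 1 0 0 0 = 1 := by
  ext i j
  fin_cases i <;> fin_cases j <;> simp [cd4]

def cd4Subring : Subring (Matrix (Fin 4) (Fin 4) ℝ) where
  carrier := {z | ∃ a b c d : ℝ, z = cd4 α a b c d}
  mul_mem' := by
    rintro _ _ ⟨a, b, c, d, rfl⟩ ⟨e, f, g, h, rfl⟩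
    exact ⟨_, _, _, _, cd4_mul α a b c d e f g h⟩
  one_mem' := ⟨1, 0, 0, 0, (cd4_one α).symm⟩
  add_mem' := by
    rintro _ _ ⟨a, b, c, d, rfl⟩ ⟨e, f, g, h, rfl⟩
    exact ⟨_, _, _, _, cd4_add α a b c d e f g h⟩
  zero_mem' := ⟨0, 0, 0, 0, (cd4_zero α).symm⟩
  neg_mem' := by
    rintro _ ⟨a, b, c, d, rfl⟩
    exact ⟨_, _, _, _, cd4_neg α a b c d⟩

theorem mem_cd4Subring {z : Matrix (Fin 4) (Fin 4) ℝ} :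
    z ∈ cd4Subring α ↔ ∃ a b c d : ℝ, z = cd4 α a b c d :=
  Iff.rfl

theorem cd4Subring_mul_comm {x y : Matrix (Fin 4) (Fin 4) ℝ}
    (hx : x ∈ cd4Subring α) (hy : y ∈ cd4Subring α) : x * y = y * x := by
  obtain ⟨a, b, c, d, rfl⟩ := hx
  obtain ⟨e, f, g, h, rfl⟩ := hy
  exact cd4_mul_comm α a b c d e f g h

end cd4

theorem stmt_19 (α : ℝ) :
    (∃ S : Subring (Matrix (Fin 4) (Fin 4) ℝ),
      (∀ z, z ∈ S ↔ ∃ a b c d : ℝ, z = cd4 α a b c d) ∧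
      ∀ x ∈ S, ∀ y ∈ S, x * y = y * x) ∧
    (∀ αK β γ α' β' γ' α'' β'' γ'' : ℝ,
      (αK, β, γ, α', β', γ', α'', β'', γ'') =
        (α, α, α ^ 2, α, α, 1, α, α, 1) →
      αK * β = γ * γ' * γ'' ∧ β * γ = αK * α' * α'' ∧ γ * αK = β * β' * β'' ∧
      αK * α' = β * β' ∧ β * β' = γ * γ' ∧ γ * γ' = α'' * β'' * γ'' ∧
      αK * α'' = β * β'' ∧ β * β'' = γ * γ'' ∧ γ * γ'' = α' * β' * γ') := by
  refine ⟨⟨cd4Subring α, fun _ => mem_cd4Subring α,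
    fun _ hx _ hy => cd4Subring_mul_comm α hx hy⟩, ?_⟩
  rintro _ _ _ _ _ _ _ _ _ ⟨⟩
  refine ⟨?_, ?_, ?_, ?_, ?_, ?_, ?_, ?_, ?_⟩ <;> ring
end
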